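/- For the Rosenbrock function with metric M(x) = [[400x₁² + 1, -200x₁], [-200x₁, 100]] and natural gradient field h(x) = -2(x₁ - 1, x₁² - 2x₁ + x₂), one has the exact matrix identity M(x)(∂h/∂x) + (∂h/∂x)ᵀM(x) + Ṁ(x) = -4M(x), where Ṁ(x) = Σᵢ(∂M/∂xᵢ)hᵢ(x); hence the flow ẋ = h(x) is contracting with rate 2 in metric M. -/

import Mathlib

/-! All entries of `M` and `h` are polynomials, so `∂h/∂x` and `Ṁ` follow entrywise from the
sum, product and power rules for partial derivatives, and the contraction identity is then a
polynomial identity in `x₁`. With it, `-(Ṁ + (∂h/∂x)ᵀM + M(∂h/∂x) + 4M)` vanishes and is therefore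
positive semidefinite. -/

open Matrix

noncomputable def pd {ι : Type*} [Fintype ι] [DecidableEq ι]
    (f : (ι → ℝ) → ℝ) (i : ι) (x : ι → ℝ) : ℝ :=
  fderiv ℝ f x (Pi.single i 1)

/-- The Rosenbrock metric M(x). -/
noncomputable def rosMetric (x : Fin 2 → ℝ) : Matrix (Fin 2) (Fin 2) ℝ :=
  !![400 * (x 0) ^ 2 + 1, -200 * x 0; -200 * x 0, 100]

/-- The natural gradient field of the Rosenbrock function. -/
noncomputable def rosField (x : Fin 2 → ℝ) : Fin 2 → ℝ :=
  ![-2 * (x 0 - 1), -2 * ((x 0) ^ 2 - 2 * x 0 + x 1)]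

/-- Jacobian ∂h/∂x of the field. -/
noncomputable def rosJac (x : Fin 2 → ℝ) : Matrix (Fin 2) (Fin 2) ℝ :=
  Matrix.of fun i j => pd (fun y => rosField y i) j x

/-- Ṁ = Σᵢ (∂M/∂xᵢ) hᵢ along the field. -/
noncomputable def rosMDot (x : Fin 2 → ℝ) : Matrix (Fin 2) (Fin 2) ℝ :=
  Matrix.of fun i j => ∑ k, pd (fun y => rosMetric y i j) k x * rosField x k

section PartialDerivative

variable {ι : Type*} [Fintype ι] [DecidableEq ι] {f g : (ι → ℝ) → ℝ} {x : ι → ℝ}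

lemma pd_const (c : ℝ) (i : ι) : pd (fun _ => c) i x = 0 := by
  simp [pd]

lemma pd_apply (i j : ι) : pd (fun y => y i) j x = if i = j then 1 else 0 := by
  simp [pd, (hasFDerivAt_apply i x).fderiv, Pi.single_apply]

lemma pd_add (hf : DifferentiableAt ℝ f x) (hg : DifferentiableAt ℝ g x) (i : ι) :
    pd (fun y => f y + g y) i x = pd f i x + pd g i x := by
  simp [pd, fderiv_fun_add hf hg]

lemma pd_sub (hf : DifferentiableAt ℝ f x) (hg : DifferentiableAt ℝ g x) (i : ι) :
    pd (fun y => f y - g y) i x = pd f i x - pd g i x := by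
  simp [pd, fderiv_fun_sub hf hg]

lemma pd_mul (hf : DifferentiableAt ℝ f x) (hg : DifferentiableAt ℝ g x) (i : ι) :
    pd (fun y => f y * g y) i x = f x * pd g i x + g x * pd f i x := by
  simp [pd, fderiv_fun_mul hf hg]

lemma pd_pow (hf : DifferentiableAt ℝ f x) (n : ℕ) (i : ι) :
    pd (fun y => f y ^ n) i x = n * f x ^ (n - 1) * pd f i x := by
  simp [pd, fderiv_fun_pow n hf]

end PartialDerivative

lemma rosJac_eq (x : Fin 2 → ℝ) : rosJac x = !![-2, 0; 4 - 4 * x 0, -2] := by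
  ext i j
  fin_cases i <;> fin_cases j <;>
    simp (disch := fun_prop) only [rosJac, rosField, of_apply, Fin.zero_eta, Fin.mk_one,
      cons_val_zero, cons_val_one, pd_add, pd_sub, pd_mul, pd_pow, pd_apply, pd_const]
  all_goals norm_num
  ring

lemma rosMDot_eq (x : Fin 2 → ℝ) :
    rosMDot x = !![1600 * x 0 * (1 - x 0), 400 * (x 0 - 1); 400 * (x 0 - 1), 0] := by
  ext i j
  fin_cases i <;> fin_cases j <;>
    simp (disch := fun_prop) only [rosMDot, rosMetric, of_apply, Fin.zero_eta, Fin.mk_one,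
      cons_val_zero, cons_val_one, Fin.sum_univ_two, pd_add, pd_mul, pd_pow, pd_apply, pd_const]
  all_goals norm_num [rosField]
  all_goals ring

lemma rosMetric_mul_rosJac_add_transpose_add_rosMDot (x : Fin 2 → ℝ) :
    rosMetric x * rosJac x + (rosJac x)ᵀ * rosMetric x + rosMDot x
      = (-4 : ℝ) • rosMetric x := by
  rw [rosJac_eq, rosMDot_eq, rosMetric]
  ext i j
  fin_cases i <;> fin_cases j <;> simp [mul_apply, Fin.sum_univ_two] <;> ring

/-- M(∂h/∂x) + (∂h/∂x)ᵀM + Ṁ = -4M exactly; hence the Rosenbrock natural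
gradient flow is contracting with rate 2 in the Rosenbrock metric. -/
theorem rosenbrock_contraction_rate_two :
    ∀ x : Fin 2 → ℝ,
      (rosMetric x * rosJac x + (rosJac x)ᵀ * rosMetric x + rosMDot x
        = (-4 : ℝ) • rosMetric x) ∧
      (-(rosMDot x + (rosJac x)ᵀ * rosMetric x + rosMetric x * rosJac x
          + (2 * 2 : ℝ) • rosMetric x)).PosSemidef := by
  intro x
  have identity := rosMetric_mul_rosJac_add_transpose_add_rosMDot x
  refine ⟨identity, ?_⟩
  have zero : -(rosMDot x + (rosJac x)ᵀ * rosMetric x + rosMetric x * rosJac x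
      + (2 * 2 : ℝ) • rosMetric x) = 0 := by
    rw [add_comm (rosMDot x), add_comm _ (rosMetric x * rosJac x), ← add_assoc, identity]
    module
  exact zero ▸ PosSemidef.zero
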